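/- arXiv:2511.09125 — 2 statements merged into one kernel-verified Lean document; each statement's English description precedes it below -/
import Mathlib

section
/- Let ℓ be a prime number. Every subgroup of finite index of the special linear group SL₃(ℚ_ℓ) is equal to the whole group SL₃(ℚ_ℓ). -/
open Matrix

variable {ℓ : ℕ} [Fact ℓ.Prime]

local notation "𝕂" => ℚ_[ℓ]
local notation "G" => Matrix.SpecialLinearGroup (Fin 3) ℚ_[ℓ]

private lemma transvection_pow {i j : Fin 3} (h : i ≠ j) (c : 𝕂) (k : ℕ) :
    (transvection i j c) ^ k = transvection i j (k * c) := by
  induction k with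
  | zero => simp [transvection_zero]
  | succ n ih =>
      rw [pow_succ, ih, transvection_mul_transvection_same i j h]
      push_cast; ring_nf

/-- transvection as an element of SL3. -/
private noncomputable def slT (i j : Fin 3) (h : i ≠ j) (c : 𝕂) : G :=
  ⟨transvection i j c, det_transvection_of_ne i j h c⟩

private lemma slT_pow (i j : Fin 3) (h : i ≠ j) (c : 𝕂) (k : ℕ) (hk : (k : 𝕂) ≠ 0) :
    (slT i j h (c / (k:𝕂))) ^ k = slT i j h c := by
  apply Subtype.ext
  rw [Matrix.SpecialLinearGroup.coe_pow]
  show (transvection i j (c / (k:𝕂))) ^ k = transvection i j c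
  rw [transvection_pow h, mul_div_cancel₀ _ hk]

private lemma slT_mem (H : Subgroup G) (hH : H.FiniteIndex)
    (i j : Fin 3) (h : i ≠ j) (c : 𝕂) : slT i j h c ∈ H := by
  set K := H.normalCore with hK
  haveI : K.FiniteIndex := Subgroup.finiteIndex_normalCore H
  haveI : K.Normal := Subgroup.normalCore_normal H
  have hN : ((K.index : ℕ) : 𝕂) ≠ 0 := by
    exact_mod_cast Nat.cast_ne_zero.mpr Subgroup.FiniteIndex.index_ne_zero
  have := Subgroup.pow_index_mem K (slT i j h (c / K.index))
  rw [slT_pow i j h c K.index hN] at this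
  exact H.normalCore_le this

private lemma transvection_eq01 (c : 𝕂) :
    transvection (0 : Fin 3) 1 c = !![1, c, 0; 0, 1, 0; 0, 0, 1] := by
  ext i j
  fin_cases i <;> fin_cases j <;>
    simp [transvection, Matrix.single, Matrix.one_apply, Matrix.vecHead, Matrix.vecTail]

private lemma transvection_eq10 (c : 𝕂) :
    transvection (1 : Fin 3) 0 c = !![1, 0, 0; c, 1, 0; 0, 0, 1] := by
  ext i j
  fin_cases i <;> fin_cases j <;>
    simp [transvection, Matrix.single, Matrix.one_apply, Matrix.vecHead, Matrix.vecTail]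

private lemma transvection_eq12 (c : 𝕂) :
    transvection (1 : Fin 3) 2 c = !![1, 0, 0; 0, 1, c; 0, 0, 1] := by
  ext i j
  fin_cases i <;> fin_cases j <;>
    simp [transvection, Matrix.single, Matrix.one_apply, Matrix.vecHead, Matrix.vecTail]

private lemma transvection_eq21 (c : 𝕂) :
    transvection (2 : Fin 3) 1 c = !![1, 0, 0; 0, 1, 0; 0, c, 1] := by
  ext i j
  fin_cases i <;> fin_cases j <;>
    simp [transvection, Matrix.single, Matrix.one_apply, Matrix.vecHead, Matrix.vecTail]

private lemma diagonal_eq (a b c : 𝕂) :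
    diagonal ![a, b, c] = !![a, 0, 0; 0, b, 0; 0, 0, c] := by
  ext i j
  fin_cases i <;> fin_cases j <;> simp [diagonal, Matrix.vecHead, Matrix.vecTail]

private lemma w01 (a : 𝕂) (ha : a ≠ 0) :
    transvection (0 : Fin 3) 1 a * transvection 1 0 (-a⁻¹) * transvection 0 1 a *
      transvection 0 1 (-1) * transvection 1 0 1 * transvection 0 1 (-1)
      = diagonal ![a, a⁻¹, 1] := by
  simp only [transvection_eq01, transvection_eq10, diagonal_eq]
  have h1 : a * a⁻¹ = 1 := mul_inv_cancel₀ ha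
  have h2 : a⁻¹ * a = 1 := inv_mul_cancel₀ ha
  simp only [Matrix.mul_fin_three]
  ext k m
  fin_cases k <;> fin_cases m <;> simp [h1, h2] <;> ring_nf <;> simp [h1, h2]

private lemma w12 (a : 𝕂) (ha : a ≠ 0) :
    transvection (1 : Fin 3) 2 a * transvection 2 1 (-a⁻¹) * transvection 1 2 a *
      transvection 1 2 (-1) * transvection 2 1 1 * transvection 1 2 (-1)
      = diagonal ![1, a, a⁻¹] := by
  simp only [transvection_eq12, transvection_eq21, diagonal_eq]
  have h1 : a * a⁻¹ = 1 := mul_inv_cancel₀ ha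
  have h2 : a⁻¹ * a = 1 := inv_mul_cancel₀ ha
  simp only [Matrix.mul_fin_three]
  ext k m
  fin_cases k <;> fin_cases m <;> simp [h1, h2] <;> ring_nf <;> simp [h1, h2]

private lemma diag01_mem (H : Subgroup G) (hH : H.FiniteIndex) (a : 𝕂) (ha : a ≠ 0)
    (g : G) (hg : (g : Matrix (Fin 3) (Fin 3) 𝕂) = diagonal ![a, a⁻¹, 1]) : g ∈ H := by
  have h01 : (0 : Fin 3) ≠ 1 := by decide
  have h10 : (1 : Fin 3) ≠ 0 := by decide
  have : g = slT 0 1 h01 a * slT 1 0 h10 (-a⁻¹) * slT 0 1 h01 a *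
      slT 0 1 h01 (-1) * slT 1 0 h10 1 * slT 0 1 h01 (-1) := by
    apply Subtype.ext
    rw [hg, ← w01 a ha]
    rfl
  rw [this]
  exact mul_mem (mul_mem (mul_mem (mul_mem (mul_mem (slT_mem H hH _ _ _ _)
    (slT_mem H hH _ _ _ _)) (slT_mem H hH _ _ _ _)) (slT_mem H hH _ _ _ _))
    (slT_mem H hH _ _ _ _)) (slT_mem H hH _ _ _ _)

private lemma diag12_mem (H : Subgroup G) (hH : H.FiniteIndex) (a : 𝕂) (ha : a ≠ 0)
    (g : G) (hg : (g : Matrix (Fin 3) (Fin 3) 𝕂) = diagonal ![1, a, a⁻¹]) : g ∈ H := by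
  have h12 : (1 : Fin 3) ≠ 2 := by decide
  have h21 : (2 : Fin 3) ≠ 1 := by decide
  have : g = slT 1 2 h12 a * slT 2 1 h21 (-a⁻¹) * slT 1 2 h12 a *
      slT 1 2 h12 (-1) * slT 2 1 h21 1 * slT 1 2 h12 (-1) := by
    apply Subtype.ext
    rw [hg, ← w12 a ha]
    rfl
  rw [this]
  exact mul_mem (mul_mem (mul_mem (mul_mem (mul_mem (slT_mem H hH _ _ _ _)
    (slT_mem H hH _ _ _ _)) (slT_mem H hH _ _ _ _)) (slT_mem H hH _ _ _ _))
    (slT_mem H hH _ _ _ _)) (slT_mem H hH _ _ _ _)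

private lemma diagonal_mem (H : Subgroup G) (hH : H.FiniteIndex) (D : Fin 3 → 𝕂)
    (hdet : det (diagonal D) = 1) (g : G) (hg : (g : Matrix (Fin 3) (Fin 3) 𝕂) = diagonal D) :
    g ∈ H := by
  have h0 : D 0 * D 1 * D 2 = 1 := by
    simpa [det_diagonal, Fin.prod_univ_three] using hdet
  have hD0 : D 0 ≠ 0 := fun h => by simp [h] at h0
  have hD1 : D 1 ≠ 0 := fun h => by simp [h] at h0
  have hD01 : D 0 * D 1 ≠ 0 := mul_ne_zero hD0 hD1
  have hD2 : D 2 = (D 0 * D 1)⁻¹ := by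
    field_simp
    linear_combination h0
  have hfun : D = fun i => ![D 0, (D 0)⁻¹, 1] i * ![1, D 0 * D 1, (D 0 * D 1)⁻¹] i := by
    funext k
    fin_cases k <;> simp [Matrix.vecHead, Matrix.vecTail]
    · rw [← mul_assoc, inv_mul_cancel₀ hD0, one_mul]
    · rw [hD2, _root_.mul_inv_rev]
  have hsplit : diagonal D =
      diagonal ![D 0, (D 0)⁻¹, 1] * diagonal ![1, D 0 * D 1, (D 0 * D 1)⁻¹] := by
    rw [diagonal_mul_diagonal, ← hfun]
  have det1 : det (diagonal ![D 0, (D 0)⁻¹, 1] : Matrix (Fin 3) (Fin 3) 𝕂) = 1 := by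
    simp [det_diagonal, Fin.prod_univ_three, Matrix.vecHead, Matrix.vecTail,
      mul_inv_cancel₀ hD0]
  have det2 : det (diagonal ![1, D 0 * D 1, (D 0 * D 1)⁻¹] : Matrix (Fin 3) (Fin 3) 𝕂) = 1 := by
    simp [det_diagonal, Fin.prod_univ_three, Matrix.vecHead, Matrix.vecTail,
      mul_inv_cancel₀ hD01]
    field_simp
  let g1 : G := ⟨diagonal ![D 0, (D 0)⁻¹, 1], det1⟩
  let g2 : G := ⟨diagonal ![1, D 0 * D 1, (D 0 * D 1)⁻¹], det2⟩
  have : g = g1 * g2 := by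
    apply Subtype.ext
    rw [hg, hsplit]
    rfl
  rw [this]
  exact mul_mem (diag01_mem H hH (D 0) hD0 g1 rfl) (diag12_mem H hH (D 0 * D 1) hD01 g2 rfl)

/-- Every finite-index subgroup of `SL₃(ℚ_ℓ)` is the whole group. -/
theorem finiteIndex_subgroup_eq_top_SL3_padic (ℓ : ℕ) [Fact ℓ.Prime]
    (H : Subgroup (Matrix.SpecialLinearGroup (Fin 3) ℚ_[ℓ])) (hH : H.FiniteIndex) :
    H = ⊤ := by
  rw [Subgroup.eq_top_iff']
  intro g
  obtain ⟨L, L', D, h⟩ :=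
    Matrix.Pivot.exists_list_transvec_mul_diagonal_mul_list_transvec (g : Matrix (Fin 3) (Fin 3) ℚ_[ℓ])
  have hdetg : det (g : Matrix (Fin 3) (Fin 3) ℚ_[ℓ]) = 1 := g.2
  have hdetD : det (diagonal D) = 1 := by
    rw [h, det_mul, det_mul, Matrix.TransvectionStruct.det_toMatrix_prod,
      Matrix.TransvectionStruct.det_toMatrix_prod] at hdetg
    simpa using hdetg
  let f : Matrix.TransvectionStruct (Fin 3) ℚ_[ℓ] → Matrix.SpecialLinearGroup (Fin 3) ℚ_[ℓ] :=
    fun t => ⟨t.toMatrix, t.det⟩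
  have hf : ∀ t, f t ∈ H := by
    rintro ⟨i, j, hij, c⟩
    exact slT_mem H hH i j hij c
  have hcoe : ∀ l : List (Matrix.TransvectionStruct (Fin 3) ℚ_[ℓ]),
      (((l.map f).prod : Matrix.SpecialLinearGroup (Fin 3) ℚ_[ℓ]) :
        Matrix (Fin 3) (Fin 3) ℚ_[ℓ]) = (l.map Matrix.TransvectionStruct.toMatrix).prod := by
    intro l
    induction l with
    | nil => simp
    | cons t l ih =>
        simp only [List.map_cons, List.prod_cons, Matrix.SpecialLinearGroup.coe_mul, ih]
        rfl
  let gd : Matrix.SpecialLinearGroup (Fin 3) ℚ_[ℓ] := ⟨diagonal D, hdetD⟩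
  have hg : g = (L.map f).prod * gd * (L'.map f).prod := by
    apply Subtype.ext
    rw [Matrix.SpecialLinearGroup.coe_mul, Matrix.SpecialLinearGroup.coe_mul, hcoe, hcoe]
    exact h
  rw [hg]
  refine mul_mem (mul_mem ?_ (diagonal_mem H hH D hdetD gd rfl)) ?_ <;>
    exact list_prod_mem (by rintro x hx; obtain ⟨t, _, rfl⟩ := List.mem_map.1 hx; exact hf t)
end

section
/- Let F be a field of characteristic zero and n a natural number. Every subgroup of finite index of the special linear group SL_n(F) is equal to the whole group SL_n(F). -/
open Matrix

private lemma transvection_pow_aux {m : Type*} [DecidableEq m] [Fintype m] {F : Type*}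
    [CommRing F] {i j : m} (hij : i ≠ j) (c : F) (k : ℕ) :
    transvection i j c ^ k = transvection i j ((k : F) * c) := by
  induction k with
  | zero => simp
  | succ k ih =>
    rw [pow_succ, ih, transvection_mul_transvection_same _ _ hij]
    push_cast
    ring_nf

set_option maxHeartbeats 2000000 in
private lemma transvection_diag_aux {m : Type*} [DecidableEq m] [Fintype m] {F : Type*}
    [Field F] {i j : m} (hij : i ≠ j) {a : F} (ha : a ≠ 0) :
    transvection i j a * transvection j i (-a⁻¹) * transvection i j a *
      (transvection i j (-1) * transvection j i 1 * transvection i j (-1)) =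
    diagonal (fun k => if k = i then a else if k = j then a⁻¹ else 1) := by
  simp only [transvection, add_mul, mul_add, one_mul, mul_one,
    single_mul_single_same, single_mul_single_of_ne, hij, hij.symm, Ne, not_false_iff,
    mul_zero, zero_mul, add_zero, zero_add]
  ext k l
  simp only [Matrix.add_apply, one_apply, Matrix.single, of_apply, diagonal_apply, ite_and]
  split_ifs <;> subst_vars <;>
    first
      | rfl
      | (exact absurd rfl (by assumption))
      | (field_simp; try ring)

private def mkSL {n : ℕ} {F : Type*} [Field F] (A : Matrix (Fin n) (Fin n) F)
    (h : A.det = 1) : Matrix.SpecialLinearGroup (Fin n) F := ⟨A, h⟩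

private lemma mkSL_mul {n : ℕ} {F : Type*} [Field F] {A B : Matrix (Fin n) (Fin n) F}
    (hA : A.det = 1) (hB : B.det = 1) (hAB : (A * B).det = 1) :
    mkSL (A * B) hAB = mkSL A hA * mkSL B hB := Subtype.ext rfl

set_option maxHeartbeats 1000000 in
/-- Over a field of characteristic zero, every finite-index subgroup of `SL_n(F)`
is the whole group. -/
theorem finiteIndex_subgroup_eq_top_SL (F : Type*) [Field F] [CharZero F] (n : ℕ)
    (H : Subgroup (Matrix.SpecialLinearGroup (Fin n) F)) (hH : H.FiniteIndex) :
    H = ⊤ := by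
  classical
  haveI := hH
  let N : Subgroup (Matrix.SpecialLinearGroup (Fin n) F) := H.normalCore
  haveI hNnorm : N.Normal := H.normalCore_normal
  haveI hNfin : N.FiniteIndex := H.finiteIndex_normalCore
  have hmF : (N.index : F) ≠ 0 := Nat.cast_ne_zero.mpr hNfin.index_ne_zero
  -- The set of determinant-one matrices whose `SL` version lies in `N`.
  let S : Set (Matrix (Fin n) (Fin n) F) :=
    {A | ∃ h : A.det = 1, mkSL A h ∈ N}
  have honeS : (1 : Matrix (Fin n) (Fin n) F) ∈ S := ⟨det_one, N.one_mem⟩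
  have hmulS : ∀ A B, A ∈ S → B ∈ S → A * B ∈ S := by
    rintro A B ⟨hA, hA'⟩ ⟨hB, hB'⟩
    have hdet : (A * B).det = 1 := by rw [det_mul, hA, hB, mul_one]
    refine ⟨hdet, ?_⟩
    rw [mkSL_mul hA hB hdet]
    exact N.mul_mem hA' hB'
  -- Every transvection lies in `S`, by divisibility.
  have htrans : ∀ (i j : Fin n), i ≠ j → ∀ c : F, transvection i j c ∈ S := by
    intro i j hij c
    refine ⟨det_transvection_of_ne i j hij c, ?_⟩
    set t : Matrix.SpecialLinearGroup (Fin n) F :=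
      mkSL (transvection i j (c / N.index)) (det_transvection_of_ne i j hij _) with ht
    have h2 : t ^ N.index ∈ N := Subgroup.pow_index_mem N t
    have heq : mkSL (transvection i j c) (det_transvection_of_ne i j hij c) =
        t ^ N.index := by
      apply Subtype.ext
      rw [Matrix.SpecialLinearGroup.coe_pow]
      show transvection i j c = transvection i j (c / N.index) ^ N.index
      rw [transvection_pow_aux hij]
      rw [mul_div_cancel₀ c hmF]
    rw [heq]
    exact h2
  -- The basic diagonal matrices `diag(..,a,..,a⁻¹,..)` lie in `S`.
  have hdiagpair : ∀ (i j : Fin n), i ≠ j → ∀ a : F, a ≠ 0 →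
      diagonal (fun k => if k = i then a else if k = j then a⁻¹ else 1) ∈ S := by
    intro i j hij a ha
    rw [← transvection_diag_aux hij ha]
    exact hmulS _ _ (hmulS _ _ (hmulS _ _ (htrans i j hij a)
      (htrans j i hij.symm (-a⁻¹))) (htrans i j hij a))
      (hmulS _ _ (hmulS _ _ (htrans i j hij (-1)) (htrans j i hij.symm 1))
        (htrans i j hij (-1)))
  -- Every diagonal matrix of determinant one lies in `S`.
  have hdiag : ∀ (s : Finset (Fin n)) (d : Fin n → F), (∀ k ∉ s, d k = 1) →
      ∏ k, d k = 1 → diagonal d ∈ S := by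
    intro s
    induction s using Finset.induction_on with
    | empty =>
      intro d hd _
      have hd1 : d = fun _ => 1 := funext fun k => hd k (Finset.notMem_empty k)
      rw [hd1, diagonal_one]
      exact honeS
    | @insert i s hi ih =>
      intro d hd hprod
      have hne : ∀ k, d k ≠ 0 := by
        intro k hk
        rw [Finset.prod_eq_zero (Finset.mem_univ k) hk] at hprod
        exact zero_ne_one hprod
      by_cases hdi : d i = 1
      · refine ih d (fun k hk => ?_) hprod
        rcases eq_or_ne k i with rfl | hki
        · exact hdi
        · exact hd k (by simp [hki, hk])
      · rcases s.eq_empty_or_nonempty with rfl | ⟨j, hj⟩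
        · exact absurd ((Finset.prod_eq_single i
            (fun b _ hb => hd b (by simp [hb])) (fun h => absurd (Finset.mem_univ i) h)).symm.trans
            hprod) hdi
        · have hji : j ≠ i := fun h => hi (h ▸ hj)
          set d' : Fin n → F := Function.update (Function.update d i 1) j (d i * d j) with hd'def
          have he : (fun k => (if k = i then d i else if k = j then (d i)⁻¹ else 1) * d' k) = d := by
            funext k
            simp only [hd'def]
            rcases eq_or_ne k i with rfl | hki
            · rw [if_pos rfl, Function.update_of_ne hji.symm, Function.update_self, mul_one]
            · rcases eq_or_ne k j with rfl | hkj
              · rw [if_neg hki, if_pos rfl, Function.update_self, inv_mul_cancel_left₀ (hne i)]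
              · rw [if_neg hki, if_neg hkj, Function.update_of_ne hkj,
                  Function.update_of_ne hki, one_mul]
          have hsplit : diagonal d =
              diagonal (fun k => if k = i then d i else if k = j then (d i)⁻¹ else 1) *
                diagonal d' := by
            rw [diagonal_mul_diagonal, he]
          rw [hsplit]
          refine hmulS _ _ (hdiagpair i j hji.symm (d i) (hne i)) (ih d' ?_ ?_)
          · intro k hk
            have hkj : k ≠ j := fun h => hk (h ▸ hj)
            rcases eq_or_ne k i with rfl | hki
            · simp [hd'def, Function.update_of_ne hji.symm]
            · have hk' : k ∉ insert i s := by simp [hki, hk]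
              simp [hd'def, Function.update_of_ne hkj, Function.update_of_ne hki, hd k hk']
          · have h1 : ∏ k, d' k =
                (d i * d j) * ∏ k ∈ Finset.univ \ {j}, Function.update d i 1 k :=
              Finset.prod_update_of_mem (Finset.mem_univ j) _ _
            have hij' : i ∈ Finset.univ \ {j} := by simp [hji.symm]
            have h2 : ∏ k ∈ Finset.univ \ {j}, Function.update d i 1 k =
                1 * ∏ k ∈ (Finset.univ \ {j}) \ {i}, d k :=
              Finset.prod_update_of_mem hij' _ _
            have h3 : (Finset.univ \ {j}) \ {i} =
                ((Finset.univ.erase i).erase j : Finset (Fin n)) := by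
              ext x
              simp only [Finset.mem_erase, Finset.mem_sdiff, Finset.mem_univ, and_true,
                Finset.mem_singleton, true_and]
            have h4 : ∏ k, d k = d i * (d j * ∏ k ∈ (Finset.univ.erase i).erase j, d k) := by
              rw [Finset.mul_prod_erase _ _ (Finset.mem_erase.mpr ⟨hji, Finset.mem_univ j⟩),
                Finset.mul_prod_erase _ _ (Finset.mem_univ i)]
            rw [h1, h2, one_mul, h3, mul_assoc, ← h4]
            exact hprod
  -- Conclude: every element of `SL_n` lies in `N ≤ H`.
  rw [eq_top_iff]
  intro g _
  apply H.normalCore_le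
  obtain ⟨L, L', D, hLD⟩ :=
    Matrix.Pivot.exists_list_transvec_mul_diagonal_mul_list_transvec (g : Matrix (Fin n) (Fin n) F)
  have hS : ∀ LL : List (TransvectionStruct (Fin n) F),
      (LL.map TransvectionStruct.toMatrix).prod ∈ S := by
    intro LL
    induction LL with
    | nil =>
      rw [List.map_nil, List.prod_nil]
      exact honeS
    | cons t L ih =>
      rw [List.map_cons, List.prod_cons]
      exact hmulS _ _ (htrans t.i t.j t.hij t.c) ih
  have hdg : det (g : Matrix (Fin n) (Fin n) F) = 1 := g.prop
  rw [hLD] at hdg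
  simp only [det_mul, TransvectionStruct.det_toMatrix_prod, one_mul, mul_one] at hdg
  have hprodD : ∏ k, D k = 1 := by rwa [det_diagonal] at hdg
  have hDS : diagonal D ∈ S :=
    hdiag Finset.univ D (fun k hk => absurd (Finset.mem_univ k) hk) hprodD
  have hgS : (g : Matrix (Fin n) (Fin n) F) ∈ S := by
    rw [hLD]
    exact hmulS _ _ (hmulS _ _ (hS L) hDS) (hS L')
  obtain ⟨h', hmem⟩ := hgS
  exact hmem
end
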